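/- arXiv:1610.03126 — 8 statements merged into one kernel-verified Lean document; each statement's English description precedes it below -/
import Mathlib

section
/- Let G be a group, g ∈ G, and let E(g) be the minimal Engel sink of g (assumed to exist and be finite). Then for every x ∈ E(g) there exists y ∈ E(g) such that x = [y, g]. -/
open scoped commutatorElement

/-- The iterated Engel commutator `[x, n a]`. -/
def engel {G : Type*} [Group G] (a x : G) : ℕ → G
  | 0 => x
  | n + 1 => ⁅engel a x n, a⁆

/-- A finite set `S` is a sink-candidate for `a`. -/
def IsSink {G : Type*} [Group G] (a : G) (S : Set G) : Prop :=
  S.Finite ∧ ∀ x : G, ∃ N : ℕ, ∀ n ≥ N, engel a x n ∈ S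

theorem IsSink.image_commutator {G : Type*} [Group G] {a : G} {S : Set G} (hS : IsSink a S) :
    IsSink a ((⁅·, a⁆) '' S) := by
  refine ⟨hS.1.image _, fun x => ?_⟩
  obtain ⟨N, hN⟩ := hS.2 x
  refine ⟨N + 1, fun n hn => ?_⟩
  obtain ⟨m, rfl⟩ := Nat.exists_eq_add_of_le' hn
  exact ⟨engel a x (m + N), hN _ (Nat.le_add_left N m), rfl⟩

theorem stmt_1 {G : Type*} [Group G] (a : G) (E : Set G)
    (hE : IsSink a E) (hmin : ∀ T : Set G, IsSink a T → E ⊆ T) :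
    ∀ x ∈ E, ∃ y ∈ E, x = ⁅y, a⁆ := by
  intro x hx
  obtain ⟨y, hy, rfl⟩ := hmin _ hE.image_commutator hx
  exact ⟨y, hy, rfl⟩
end

section
/- Let G be a group such that G/Z(G) is finite. Then the commutator subgroup G' is finite. (Schur's theorem) -/
/-!
A commutator `⁅a, b⁆` only depends on the cosets of `a` and `b` modulo the center, so `G` has
at most `[G : Z(G)]²` commutators. A group with finitely many commutators has a finite
commutator subgroup (Mathlib's instance `Finite (commutatorSet G) → Finite (commutator G)`,
proved via Schreier's lemma).
-/

open Subgroup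
open scoped commutatorElement

theorem commutatorElement_mul_left_of_mem_center {G : Type*} [Group G] (a b : G) {z : G}
    (hz : z ∈ center G) : ⁅a * z, b⁆ = ⁅a, b⁆ := by
  rw [mem_center_iff] at hz
  simp only [commutatorElement_def, mul_inv_rev]
  rw [mul_assoc a z b, ← hz b]
  group

theorem commutatorElement_mul_right_of_mem_center {G : Type*} [Group G] (a b : G) {z : G}
    (hz : z ∈ center G) : ⁅a, b * z⁆ = ⁅a, b⁆ := by
  rw [← inv_inj, commutatorElement_inv, commutatorElement_inv,
    commutatorElement_mul_left_of_mem_center b a hz]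

theorem commutatorElement_eq_of_mk_eq {G : Type*} [Group G] {a b c d : G}
    (hac : (a : G ⧸ center G) = c) (hbd : (b : G ⧸ center G) = d) : ⁅a, b⁆ = ⁅c, d⁆ := by
  rw [QuotientGroup.eq] at hac hbd
  calc ⁅a, b⁆ = ⁅a * (a⁻¹ * c), b * (b⁻¹ * d)⁆ := by
        rw [commutatorElement_mul_left_of_mem_center _ _ hac,
          commutatorElement_mul_right_of_mem_center _ _ hbd]
    _ = ⁅c, d⁆ := by group

theorem finite_commutatorSet_of_finite_quotient_center {G : Type*} [Group G]
    [Finite (G ⧸ center G)] : Finite (commutatorSet G) := by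
  let commutatorMod : (G ⧸ center G) × (G ⧸ center G) → G := fun p =>
    Quotient.lift₂ (fun a b => ⁅a, b⁆) (fun _ _ _ _ hac hbd =>
      commutatorElement_eq_of_mk_eq (Quotient.sound hac) (Quotient.sound hbd)) p.1 p.2
  refine ((Set.finite_range commutatorMod).subset ?_).to_subtype
  rintro _ ⟨a, b, rfl⟩
  exact ⟨(a, b), rfl⟩

theorem stmt_5 {G : Type*} [Group G] (h : Finite (G ⧸ Subgroup.center G)) :
    Finite (commutator G) := by
  have := finite_commutatorSet_of_finite_quotient_center (G := G)
  infer_instance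
end

section
/- Let G be a group and k a positive integer such that G/Z_k(G) is finite, where Z_k(G) is the k-th term of the upper central series. Then γ_{k+1}(G), the (k+1)-th term of the lower central series, is finite. (Baer's theorem) -/
/-!
Induction on `k`, the case `k = 0` being trivial. Suppose `G ⧸ Z_{k+1}(G)` is finite. The upper
central series of `G ⧸ Z(G)` is that of `G` shifted by one, so by induction `N = γ_{k+1}(G)` has
finite image in `G ⧸ Z(G)`. By the three subgroups lemma `Z_{k+1}(G)` centralizes `N`, and it
has finite index; hence a commutator `⁅n, g⁆` with `n ∈ N` depends only on the cosets `n Z(G)`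
and `g Z_{k+1}(G)`, so there are finitely many of them. The same argument inside `N` together
with Schur's theorem shows that `⁅N, N⁆` is finite. Modulo `⁅N, N⁆` the element `n` commutes
with `⁅n, g⁆ ∈ N`, so `⁅n, g⁆ ^ m ≡ ⁅n ^ m, g⁆ = 1` as soon as `n ^ m` is central: the
commutators are torsion. The group `γ_{k+2}(G)` they generate is then finite, because its
abelianization is a finitely generated torsion abelian group and its derived subgroup lies in
the finite group `⁅N, N⁆`.
-/

open Subgroup QuotientGroup
open scoped commutatorElement

theorem Set.Finite.image_of_factorsThrough {α β γ : Type*} {s : Set α} {f : α → β}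
    {g : α → γ} (hg : (g '' s).Finite) (hfg : ∀ x ∈ s, ∀ y ∈ s, g x = g y → f x = f y) :
    (f '' s).Finite := by
  classical
  rcases s.eq_empty_or_nonempty with rfl | ⟨a, -⟩
  · simp
  have : Nonempty α := ⟨a⟩
  refine (hg.image fun c => f (Function.invFunOn g s c)).subset ?_
  rintro _ ⟨x, hx, rfl⟩
  refine ⟨g x, Set.mem_image_of_mem g hx, hfg _ (Function.invFunOn_mem ⟨x, hx, rfl⟩) x hx ?_⟩
  exact Function.invFunOn_eq ⟨x, hx, rfl⟩

theorem finite_of_closure_eq_top_of_isOfFinOrder {H : Type*} [Group H] {S : Set H}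
    (hS : closure S = ⊤) (hSfin : S.Finite) (htor : ∀ s ∈ S, IsOfFinOrder s)
    [Finite (commutator H)] : Finite H := by
  have : Group.FG H := Group.fg_iff.mpr ⟨S, hS, hSfin⟩
  have : Group.FG (Abelianization H) :=
    Group.fg_of_surjective (f := Abelianization.of) QuotientGroup.mk_surjective
  have htors : IsMulTorsion (Abelianization H) := by
    have hle : closure (Abelianization.of '' S) ≤ CommGroup.torsion _ :=
      (closure_le _).mpr <| by
        rintro _ ⟨s, hs, rfl⟩
        exact Abelianization.of.isOfFinOrder (htor s hs)
    rw [← MonoidHom.map_closure, hS, map_top_of_surjective _ QuotientGroup.mk_surjective] at hle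
    exact fun x => hle (mem_top x)
  have : Finite (H ⧸ commutator H) := CommGroup.finite_of_fg_isMulTorsion (Abelianization H) htors
  exact Finite.of_subgroup_quotient (commutator H)

section

variable {G : Type*} [Group G]

theorem commutatorElement_mul_left_of_commute {a b z : G} (h : Commute z b) :
    ⁅a * z, b⁆ = ⁅a, b⁆ := by
  rw [commutatorElement_mul_left_eq_conj_mul, commutatorElement_eq_one_iff_commute.mpr h,
    mul_one, mul_inv_cancel, one_mul]

theorem commutatorElement_mul_right_of_commute {a b z : G} (h : Commute a z) :
    ⁅a, b * z⁆ = ⁅a, b⁆ := by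
  rw [commutatorElement_mul_right_eq_mul_conj, commutatorElement_eq_one_iff_commute.mpr h,
    mul_one, mul_inv_cancel_right]

theorem commutatorElement_pow_left_of_commute {p q : G} (h : Commute p ⁅p, q⁆) (n : ℕ) :
    ⁅p ^ n, q⁆ = ⁅p, q⁆ ^ n := by
  induction n with
  | zero => simp
  | succ n ih =>
    rw [pow_succ', commutatorElement_mul_left_eq_conj_mul, ih, (h.pow_right n).eq,
      mul_inv_cancel_right, pow_succ]

theorem QuotientGroup.exists_mem_eq_mul_of_mk_eq {A : Subgroup G} {x y : G}
    (h : (x : G ⧸ A) = y) : ∃ a ∈ A, y = x * a :=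
  ⟨x⁻¹ * y, QuotientGroup.eq.mp h, by group⟩

theorem finite_image2_commutatorElement {H K A B : Subgroup G} (hA : A ≤ centralizer K)
    (hB : B ≤ centralizer H) (hH : ((↑) '' (H : Set G) : Set (G ⧸ A)).Finite)
    (hK : ((↑) '' (K : Set G) : Set (G ⧸ B)).Finite) :
    (Set.image2 (⁅·, ·⁆) (H : Set G) (K : Set G)).Finite := by
  rw [← Set.image_prod]
  refine Set.Finite.image_of_factorsThrough (g := fun p => ((p.1 : G ⧸ A), (p.2 : G ⧸ B)))
    (by rw [← Set.prod_image_image_eq]; exact hH.prod hK) ?_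
  rintro ⟨h, k⟩ ⟨-, hk⟩ ⟨h', k'⟩ ⟨hh', -⟩ hhk
  dsimp only at hk hh' hhk ⊢
  obtain ⟨a, ha, rfl⟩ := exists_mem_eq_mul_of_mk_eq (Prod.ext_iff.mp hhk).1
  obtain ⟨b, hb, rfl⟩ := exists_mem_eq_mul_of_mk_eq (Prod.ext_iff.mp hhk).2
  rw [commutatorElement_mul_right_of_commute (mem_centralizer_iff.mp (hB hb) _ hh'),
    commutatorElement_mul_left_of_commute (mem_centralizer_iff.mp (hA ha) _ hk).symm]

theorem finite_commutator_of_finite_image_center (N : Subgroup G)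
    (hN : ((↑) '' (N : Set G) : Set (G ⧸ center G)).Finite) : Finite (⁅N, N⁆ : Subgroup G) := by
  have hS := finite_image2_commutatorElement (center_le_centralizer _) (center_le_centralizer _)
    hN hN
  have : Finite (commutatorSet N) := by
    refine (Set.Finite.of_finite_image (hS.subset ?_) N.subtype_injective.injOn).to_subtype
    rintro _ ⟨_, ⟨a, b, rfl⟩, rfl⟩
    exact ⟨a, a.2, b, b.2, rfl⟩
  have : Finite (commutator N) := inferInstance
  rw [← map_subtype_commutator]
  exact ((commutator N : Set N).toFinite.image N.subtype).to_subtype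

theorem finite_closure_of_isOfFinOrder {S : Set G} (hS : S.Finite)
    (htor : ∀ s ∈ S, IsOfFinOrder s) (hcomm : Finite (⁅closure S, closure S⁆ : Subgroup G)) :
    Finite (closure S) := by
  have : Finite (commutator (closure S)) := by
    rw [← map_subtype_commutator] at hcomm
    exact Finite.of_equiv _ (equivMapOfInjective _ _ (subtype_injective _)).symm.toEquiv
  refine finite_of_closure_eq_top_of_isOfFinOrder closure_closure_coe_preimage
    (hS.preimage Subtype.val_injective.injOn) fun s hs => ?_
  exact ((subtype_injective _).isOfFinOrder_iff (f := (closure S).subtype)).mp (htor _ hs)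

theorem isOfFinOrder_commutatorElement_of_mem {N : Subgroup G} [N.Normal]
    (hNN : Finite (⁅N, N⁆ : Subgroup G)) {p : G} (hp : p ∈ N)
    (hpZ : IsOfFinOrder (p : G ⧸ center G)) (q : G) : IsOfFinOrder ⁅p, q⁆ := by
  obtain ⟨m, hm, hpm⟩ := isOfFinOrder_iff_pow_eq_one.mp hpZ
  rw [← QuotientGroup.mk_pow, QuotientGroup.eq_one_iff] at hpm
  have hpq : ⁅p, q⁆ ∈ N := commutator_le_left N ⊤ (commutator_mem_commutator hp (mem_top q))
  let π := QuotientGroup.mk' (⁅N, N⁆ : Subgroup G)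
  have hcomm : Commute (π p) ⁅π p, π q⁆ := by
    rw [← map_commutatorElement, ← commutatorElement_eq_one_iff_commute, ← map_commutatorElement,
      mk'_apply, eq_one_iff]
    exact commutator_mem_commutator hp hpq
  have hpqm : ⁅p, q⁆ ^ m ∈ (⁅N, N⁆ : Subgroup G) := by
    rw [← eq_one_iff, ← mk'_apply]
    calc π (⁅p, q⁆ ^ m) = ⁅π p, π q⁆ ^ m := by rw [map_pow, map_commutatorElement]
      _ = π ⁅p ^ m, q⁆ := by
        rw [← commutatorElement_pow_left_of_commute hcomm m, map_commutatorElement, map_pow]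
      _ = 1 := by
        rw [commutatorElement_eq_one_iff_mul_comm.mpr (mem_center_iff.mp hpm q).symm, map_one]
  exact ((⁅N, N⁆ : Subgroup G).subtype.isOfFinOrder (isOfFinOrder_of_finite ⟨_, hpqm⟩)).of_pow
    hm.ne'

theorem finite_commutator_top_of_finite_map_center (N C : Subgroup G) [N.Normal]
    (hC : Finite (G ⧸ C)) (hCN : C ≤ centralizer N) (hN : Finite (N.map (mk' (center G)))) :
    Finite (⁅N, ⊤⁆ : Subgroup G) := by
  have hNZ : ((↑) '' (N : Set G) : Set (G ⧸ center G)).Finite :=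
    (N.map (mk' (center G)) : Set (G ⧸ center G)).toFinite
  have hNN := finite_commutator_of_finite_image_center N hNZ
  have hS := finite_image2_commutatorElement (K := ⊤) (center_le_centralizer _) hCN hNZ
    (Set.toFinite _)
  have hle : ⁅N, ⊤⁆ ≤ N := commutator_le_left N ⊤
  rw [Subgroup.commutator_def] at hle ⊢
  refine finite_closure_of_isOfFinOrder hS ?_ ?_
  · rintro _ ⟨p, hp, q, -, rfl⟩
    exact isOfFinOrder_commutatorElement_of_mem hNN hp
      ((N.map (mk' (center G))).subtype.isOfFinOrder
        (isOfFinOrder_of_finite ⟨(p : G ⧸ center G), mem_map_of_mem _ hp⟩)) q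
  · exact Finite.of_injective _ (inclusion_injective (commutator_mono hle hle))

theorem commutator_commutator_le_of_rotate {A B C W : Subgroup G} [W.Normal]
    (h1 : ⁅⁅B, C⁆, A⁆ ≤ W) (h2 : ⁅⁅C, A⁆, B⁆ ≤ W) : ⁅⁅A, B⁆, C⁆ ≤ W := by
  rw [← ker_mk' W, ← Subgroup.map_eq_bot_iff] at h1 h2 ⊢
  simp only [map_commutator] at h1 h2 ⊢
  exact commutator_commutator_eq_bot_of_rotate h1 h2

theorem commutator_lowerCentralSeries_upperCentralSeries_le (i j : ℕ) :
    ⁅(⊤ : Subgroup G).lowerCentralSeries i, Subgroup.upperCentralSeries G (j + i + 1)⁆ ≤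
      Subgroup.upperCentralSeries G j := by
  have top_comm (n : ℕ) : ⁅(⊤ : Subgroup G), Subgroup.upperCentralSeries G (n + 1)⁆ ≤
      Subgroup.upperCentralSeries G n := by
    rw [commutator_comm]; exact Subgroup.commutator_upperCentralSeries_top_le G n
  induction i generalizing j with
  | zero => exact top_comm j
  | succ i ih =>
    have ih' := ih (j + 1)
    rw [Nat.add_right_comm j 1 i] at ih'
    rw [Subgroup.lowerCentralSeries_succ]
    apply commutator_commutator_le_of_rotate
    · calc _ ≤ ⁅Subgroup.upperCentralSeries G (j + i + 1), (⊤ : Subgroup G).lowerCentralSeries i⁆ :=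
            commutator_mono (top_comm _) le_rfl
        _ ≤ _ := by rw [commutator_comm]; exact ih j
    · calc _ ≤ ⁅Subgroup.upperCentralSeries G (j + 1), ⊤⁆ :=
            commutator_mono (by rw [commutator_comm]; exact ih') le_rfl
        _ ≤ _ := Subgroup.commutator_upperCentralSeries_top_le G j

theorem upperCentralSeries_le_centralizer_lowerCentralSeries (n : ℕ) :
    Subgroup.upperCentralSeries G (n + 1) ≤
      centralizer ((⊤ : Subgroup G).lowerCentralSeries n : Set G) := by
  rw [← commutator_eq_bot_iff_le_centralizer, commutator_comm, ← le_bot_iff]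
  simpa using commutator_lowerCentralSeries_upperCentralSeries_le n 0

theorem finite_quotient_upperCentralSeries_quotient_center {n : ℕ}
    (h : Finite (G ⧸ Subgroup.upperCentralSeries G (n + 1))) :
    Finite ((G ⧸ center G) ⧸ Subgroup.upperCentralSeries (G ⧸ center G) n) := by
  rw [← Subgroup.comap_upperCentralSeries_quotient_center,
    ← finiteIndex_iff_finite_quotient] at h
  rw [← finiteIndex_iff_finite_quotient]
  exact ⟨by rw [← index_comap_of_surjective _ (mk'_surjective _)]; exact h.index_ne_zero⟩

end

theorem stmt_6_general {G : Type*} [Group G] (k : ℕ)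
    (h : Finite (G ⧸ Subgroup.upperCentralSeries G k)) :
    Finite ((⊤ : Subgroup G).lowerCentralSeries k) := by
  induction k generalizing G with
  | zero =>
    rw [Subgroup.upperCentralSeries_zero] at h
    exact Finite.of_equiv _ (quotientBot.trans topEquiv.symm).toEquiv
  | succ k ih =>
    rw [Subgroup.lowerCentralSeries_succ]
    refine finite_commutator_top_of_finite_map_center _ _ h
      (upperCentralSeries_le_centralizer_lowerCentralSeries k) ?_
    rw [Subgroup.map_lowerCentralSeries, map_top_of_surjective _ (mk'_surjective _)]
    exact ih (finite_quotient_upperCentralSeries_quotient_center h)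

theorem stmt_6 {G : Type*} [Group G] (k : ℕ) (hk : 0 < k)
    (h : Finite (G ⧸ Subgroup.upperCentralSeries G k)) :
    Finite ((⊤ : Subgroup G).lowerCentralSeries k) :=
  stmt_6_general k h
end

section
/- In any group G, a finite subset X that is invariant under conjugation by all elements of G and consists of elements of finite order generates a finite subgroup. (Dicman's Lemma) -/
/-! The centralizer of `X` is the intersection of the stabilizers of the points of `X` under
conjugation, so it has finite index; it is also the centralizer of `H = ⟨X⟩`, so the center of `H`
has finite index in `H`. Then a commutator in `H` depends only on the classes of its entries modulo
the center, so `H` has finitely many commutators and, by Schur's theorem, a finite commutator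
subgroup `H'`. Finally `H ⧸ H'` is abelian and generated by finitely many elements of finite order,
hence finite. -/

open Subgroup
open scoped commutatorElement

section

variable {G : Type*} [Group G]

theorem Subgroup.index_centralizer_singleton (x : G) :
    (centralizer {x}).index = (MulAction.orbit (ConjAct G) x).ncard := by
  rw [centralizer_eq_comap_stabilizer]
  exact (index_comap_of_surjective _ ConjAct.toConjAct.surjective).trans
    (MulAction.index_stabilizer _ _)

theorem Subgroup.finiteIndex_centralizer_of_conj_mem {S : Set G} (hS : S.Finite)
    (hconj : ∀ g : G, ∀ x ∈ S, g⁻¹ * x * g ∈ S) : (centralizer S).FiniteIndex := by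
  have : Finite S := hS
  rw [centralizer_eq_iInf, iInf_subtype']
  refine finiteIndex_iInf fun ⟨x, hx⟩ => ⟨?_⟩
  have horbit : MulAction.orbit (ConjAct G) x ⊆ S := by
    rintro _ ⟨g, rfl⟩
    simpa [ConjAct.smul_def] using hconj (ConjAct.ofConjAct g)⁻¹ x hx
  rw [index_centralizer_singleton]
  exact ((Set.ncard_pos (hS.subset horbit)).mpr (MulAction.nonempty_orbit x)).ne'

theorem Subgroup.finiteIndex_center_of_finiteIndex_centralizer (H : Subgroup G)
    [(centralizer (H : Set G)).FiniteIndex] : (center H).FiniteIndex :=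
  finiteIndex_of_le (H := (centralizer (H : Set G)).subgroupOf H) fun _ hh =>
    mem_center_iff.mpr fun k => Subtype.ext (hh k k.2)

theorem commutatorElement_mul_mem_center {a b z w : G} (hz : z ∈ center G)
    (hw : w ∈ center G) : ⁅a * z, b * w⁆ = ⁅a, b⁆ := by
  rw [mem_center_iff] at hz hw
  simp only [commutatorElement_def, mul_inv_rev]
  calc a * z * (b * w) * (z⁻¹ * a⁻¹) * (w⁻¹ * b⁻¹)
      = a * (z * (b * w)) * z⁻¹ * a⁻¹ * w⁻¹ * b⁻¹ := by group
    _ = a * b * (w * a⁻¹) * w⁻¹ * b⁻¹ := by rw [← hz]; group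
    _ = a * b * a⁻¹ * b⁻¹ := by rw [← hw]; group

theorem Subgroup.finite_commutatorSet_of_finiteIndex_center [(center G).FiniteIndex] :
    Finite (commutatorSet G) := by
  have : Finite (G ⧸ center G) := finite_quotient_of_finiteIndex
  refine (Set.Finite.subset (Set.finite_range
    fun p : (G ⧸ center G) × (G ⧸ center G) => ⁅p.1.out, p.2.out⁆) ?_).to_subtype
  rintro _ ⟨a, b, rfl⟩
  have hout (g : G) : g⁻¹ * (g : G ⧸ center G).out ∈ center G :=
    QuotientGroup.eq.mp (QuotientGroup.out_eq' _).symm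
  refine ⟨(a, b), ?_⟩
  simpa only [mul_inv_cancel_left] using
    commutatorElement_mul_mem_center (a := a) (b := b) (hout a) (hout b)

theorem Abelianization.finite_of_closure_eq_top {K : Type*} [Group K] {T : Set K}
    (hT : T.Finite) (hgen : closure T = ⊤) (hord : ∀ x ∈ T, IsOfFinOrder x) :
    Finite (Abelianization K) := by
  have hof : Function.Surjective (of : K →* Abelianization K) := QuotientGroup.mk_surjective
  have : Group.FG K := Group.fg_iff.mpr ⟨T, hgen, hT⟩
  have : Group.FG (Abelianization K) := Group.fg_of_surjective hof
  have hgen' : closure (of '' T) = ⊤ := by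
    rw [← MonoidHom.map_closure, hgen, ← MonoidHom.range_eq_map, MonoidHom.range_eq_top.mpr hof]
  have htorsion : closure (of '' T) ≤ CommGroup.torsion (Abelianization K) :=
    (closure_le _).mpr (Set.image_subset_iff.mpr fun x hx => of.isOfFinOrder (hord x hx))
  exact CommGroup.finite_of_fg_isMulTorsion _ fun a => htorsion (hgen' ▸ mem_top a)

end

theorem stmt_7 {G : Type*} [Group G] (X : Finset G)
    (hconj : ∀ g : G, ∀ x ∈ X, g⁻¹ * x * g ∈ X)
    (hord : ∀ x ∈ X, IsOfFinOrder x) :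
    Finite (Subgroup.closure (X : Set G)) := by
  set H := closure (X : Set G)
  have : (centralizer (H : Set G)).FiniteIndex := by
    rw [centralizer_closure]
    exact finiteIndex_centralizer_of_conj_mem X.finite_toSet hconj
  have : (center H).FiniteIndex := H.finiteIndex_center_of_finiteIndex_centralizer
  -- Mathlib's instance `Finite (commutatorSet H) → Finite (commutator H)` is Schur's theorem.
  have : Finite (commutatorSet H) := finite_commutatorSet_of_finiteIndex_center
  have : Finite (H ⧸ commutator H) :=
    Abelianization.finite_of_closure_eq_top (X.finite_toSet.preimage H.subtype_injective.injOn)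
      (closure_preimage_eq_top _) fun x hx => Submonoid.isOfFinOrder_coe.mp (hord x hx)
  exact Finite.of_subgroup_quotient (commutator H)
end

section
/- Let G = H⟨a⟩ where H is a nilpotent normal subgroup of G of class c, a is n-Engel in G, and let K = Z(H). Then K ≤ Z_n(G), the n-th term of the upper central series of G. -/
/-!
`K = H ⊓ C_G(H)` is normal in `G`, so for `x ∈ K` also `⁅x, a⁆ ∈ K`, and
`[x, (m + 1) a] = [⁅x, a⁆, m a]`. By induction on `m`, `[x, m a] = 1` then gives
`⁅x, a⁆ ∈ Z_{m-1}(G)`. Modulo `Z_{m-1}(G)` the element `x` thus commutes with `a` and with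
`H`, which together generate `G`, so `x ∈ Z_m(G)`.
-/

open scoped commutatorElement

section

variable {G : Type*} [Group G]

theorem engel_succ' (a x : G) (n : ℕ) : engel a x (n + 1) = engel a ⁅x, a⁆ n := by
  induction n with
  | zero => rfl
  | succ n ih => rw [engel, ih, engel]

theorem commutatorElement_mem_iff_mem_comap_centralizer (N : Subgroup G) [N.Normal] (x g : G) :
    ⁅x, g⁆ ∈ N ↔ g ∈ (Subgroup.centralizer {(x : G ⧸ N)}).comap (QuotientGroup.mk' N) := by
  rw [← QuotientGroup.eq_one_iff, ← QuotientGroup.mk'_apply, map_commutatorElement,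
    commutatorElement_eq_one_iff_commute, Subgroup.mem_comap,
    Subgroup.mem_centralizer_singleton_iff]
  exact ⟨Commute.symm, Commute.symm⟩

theorem commutatorElement_mem_of_mem_centralizer {N H : Subgroup G} [N.Normal] {a x : G}
    (hgen : H ⊔ Subgroup.closure {a} = ⊤) (hxH : x ∈ Subgroup.centralizer (H : Set G))
    (hxa : ⁅x, a⁆ ∈ N) (g : G) : ⁅x, g⁆ ∈ N := by
  simp only [commutatorElement_mem_iff_mem_comap_centralizer N x] at hxa ⊢
  have hH : H ≤ (Subgroup.centralizer {(x : G ⧸ N)}).comap (QuotientGroup.mk' N) := fun h hh =>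
    (commutatorElement_mem_iff_mem_comap_centralizer N x h).mp <| by
      rw [commutatorElement_eq_one_iff_commute.mpr (Subgroup.mem_centralizer_iff.mp hxH h hh).symm]
      exact one_mem N
  have hG : H ⊔ Subgroup.closure {a} ≤
      (Subgroup.centralizer {(x : G ⧸ N)}).comap (QuotientGroup.mk' N) :=
    sup_le hH ((Subgroup.closure_le _).mpr (Set.singleton_subset_iff.mpr hxa))
  exact hG (hgen ▸ Subgroup.mem_top g)

theorem commutatorElement_mem_inf_centralizer (H : Subgroup G) [H.Normal] {x : G} (a : G)
    (hx : x ∈ H ⊓ Subgroup.centralizer (H : Set G)) :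
    ⁅x, a⁆ ∈ H ⊓ Subgroup.centralizer (H : Set G) := by
  rw [commutatorElement_def, mul_assoc x, mul_assoc x]
  exact mul_mem hx ((Subgroup.normal_inf_normal H _).conj_mem _ (inv_mem hx) a)

theorem mem_upperCentralSeries_of_engel_eq_one {H : Subgroup G} [H.Normal] {a : G}
    (hgen : H ⊔ Subgroup.closure {a} = ⊤) (n : ℕ) {x : G}
    (hx : x ∈ H ⊓ Subgroup.centralizer (H : Set G)) (hxn : engel a x n = 1) :
    x ∈ Subgroup.upperCentralSeries G n := by
  induction n generalizing x with
  | zero =>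
    rw [show x = 1 from hxn]
    exact one_mem _
  | succ n ih =>
    rw [engel_succ'] at hxn
    rw [Subgroup.mem_upperCentralSeries_succ_iff]
    exact commutatorElement_mem_of_mem_centralizer hgen hx.2
      (ih (commutatorElement_mem_inf_centralizer H a hx) hxn)

end

theorem stmt_9_general {G : Type*} [Group G] (H : Subgroup G) [H.Normal] (a : G)
    (hgen : H ⊔ Subgroup.closure {a} = ⊤) (n : ℕ)
    (hEngel : ∀ x : G, engel a x n = 1) :
    H ⊓ Subgroup.centralizer (H : Set G) ≤ upperCentralSeries G n :=
  fun x hx => mem_upperCentralSeries_of_engel_eq_one hgen n hx (hEngel x)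

theorem stmt_9 {G : Type*} [Group G] (H : Subgroup G) [H.Normal] (a : G)
    (hgen : H ⊔ Subgroup.closure {a} = ⊤)
    (hH : Group.IsNilpotent ↥H) (n : ℕ)
    (hEngel : ∀ x : G, engel a x n = 1) :
    H ⊓ Subgroup.centralizer (H : Set G) ≤ upperCentralSeries G n :=
  stmt_9_general H a hgen n hEngel
end

section
/- Let G = H⟨a⟩ with G ≠ 1, where H is a hypercentral normal subgroup of G and a ∈ G is a left Engel element. Then Z(G) ≠ 1. -/
open scoped commutatorElement

/-- A group is hypercentral iff its transfinite upper central series reaches the whole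
group; equivalently, every proper quotient has a nontrivial center, i.e. for every proper
normal subgroup `N` there is `x ∉ N` with `⁅x, g⁆ ∈ N` for all `g`. -/
def IsHypercentral (K : Type*) [Group K] : Prop :=
  ∀ (N : Subgroup K), N.Normal → N ≠ ⊤ → ∃ x : K, x ∉ N ∧ ∀ g : K, ⁅x, g⁆ ∈ N

theorem stmt_10 {G : Type*} [Group G] [Nontrivial G] (H : Subgroup G) [H.Normal]
    (hH : IsHypercentral ↥H) (a : G)
    (hgen : H ⊔ Subgroup.closure {a} = ⊤)
    (hEngel : ∀ x : G, ∃ n : ℕ, engel a x n = 1) :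
    Subgroup.center G ≠ ⊥ := by
  classical
  by_cases hHbot : H = ⊥
  · -- G = ⟨a⟩ is abelian; a ≠ 1 is central
    have hcent : (⊤ : Subgroup G) ≤ Subgroup.centralizer {a} := by
      rw [← hgen, hHbot, bot_sup_eq]
      refine (Subgroup.closure_le _).mpr ?_
      intro x hx
      rw [Set.mem_singleton_iff] at hx
      subst hx
      exact Subgroup.mem_centralizer_iff.mpr (by rintro g rfl; rfl)
    have ha : a ∈ Subgroup.center G := by
      rw [Subgroup.mem_center_iff]
      intro g
      have := Subgroup.mem_centralizer_iff.mp (hcent (Subgroup.mem_top g)) a rfl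
      exact this.symm
    have hane : a ≠ 1 := by
      rintro rfl
      have htb : (⊤ : Subgroup G) = ⊥ := by
        rw [← hgen, hHbot, bot_sup_eq, Subgroup.closure_singleton_one]
      obtain ⟨u, v, huv⟩ := exists_pair_ne G
      apply huv
      have hu := Subgroup.mem_bot.mp (htb ▸ Subgroup.mem_top u)
      have hv := Subgroup.mem_bot.mp (htb ▸ Subgroup.mem_top v)
      rw [hu, hv]
    intro hc
    rw [hc] at ha
    exact hane (Subgroup.mem_bot.mp ha)
  · -- H ≠ ⊥ : get a nontrivial central element of H
    have hnt : Nontrivial ↥H := (Subgroup.nontrivial_iff_ne_bot H).mpr hHbot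
    have hbt : (⊥ : Subgroup ↥H) ≠ ⊤ := by
      intro h
      obtain ⟨u, v, huv⟩ := exists_pair_ne ↥H
      apply huv
      have hu := Subgroup.mem_bot.mp (h ▸ Subgroup.mem_top u)
      have hv := Subgroup.mem_bot.mp (h ▸ Subgroup.mem_top v)
      rw [hu, hv]
    obtain ⟨x, hx1, hx2⟩ := hH ⊥ inferInstance hbt
    -- P y : y ∈ H and y centralizes H
    set P : G → Prop := fun y => y ∈ H ∧ ∀ h ∈ H, y * h = h * y with hP
    have hP0 : P (x : G) := by
      refine ⟨x.2, ?_⟩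
      intro h hh
      have := hx2 ⟨h, hh⟩
      rw [Subgroup.mem_bot] at this
      have : (⁅x, (⟨h, hh⟩ : ↥H)⁆ : ↥H) = 1 := this
      have := congrArg (Subtype.val) this
      simpa [commutatorElement_def, mul_eq_one_iff_eq_inv] using
        (commutatorElement_eq_one_iff_mul_comm.mp this)
    have hPstep : ∀ y : G, P y → P ⁅y, a⁆ := by
      intro y hy
      obtain ⟨hyH, hyc⟩ := hy
      constructor
      · have : ⁅y, a⁆ = y * (a * y⁻¹ * a⁻¹) := by group
        rw [this]
        exact H.mul_mem hyH (Subgroup.Normal.conj_mem ‹H.Normal› y⁻¹ (H.inv_mem hyH) a)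
      · intro h hh
        have hz : ∀ h ∈ H, (a * y⁻¹ * a⁻¹) * h = h * (a * y⁻¹ * a⁻¹) := by
          intro h hh
          have hh' : a⁻¹ * h * a ∈ H := by
            have := Subgroup.Normal.conj_mem ‹H.Normal› h hh a⁻¹
            simpa using this
          have hyi : ∀ h' ∈ H, y⁻¹ * h' = h' * y⁻¹ := by
            intro h' hh'
            exact (Commute.inv_left (hyc h' hh')).eq
          have := hyi _ hh'
          calc (a * y⁻¹ * a⁻¹) * h = a * (y⁻¹ * (a⁻¹ * h * a)) * a⁻¹ := by group
            _ = a * ((a⁻¹ * h * a) * y⁻¹) * a⁻¹ := by rw [this]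
            _ = h * (a * y⁻¹ * a⁻¹) := by group
        have h1 := hyc h hh
        have h2 := hz h hh
        calc ⁅y, a⁆ * h = y * (a * y⁻¹ * a⁻¹) * h := by group
          _ = y * (h * (a * y⁻¹ * a⁻¹)) := by rw [mul_assoc, h2]
          _ = (y * h) * (a * y⁻¹ * a⁻¹) := by group
          _ = h * (y * (a * y⁻¹ * a⁻¹)) := by rw [h1]; group
          _ = h * ⁅y, a⁆ := by group
    have hPn : ∀ n, P (engel a (x : G) n) := by
      intro n
      induction n with
      | zero => exact hP0
      | succ n ih => exact hPstep _ ih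
    -- minimal n with engel = 1
    have hex := hEngel (x : G)
    have hn1 : engel a (x : G) (Nat.find hex) = 1 := Nat.find_spec hex
    have hn0 : Nat.find hex ≠ 0 := by
      intro h
      rw [h] at hn1
      have hx' : (x : G) = 1 := hn1
      exact hx1 (Subgroup.mem_bot.mpr (Subtype.ext hx'))
    obtain ⟨m, hm⟩ := Nat.exists_eq_succ_of_ne_zero hn0
    set c := engel a (x : G) m with hc
    have hcne : c ≠ 1 := Nat.find_min hex (by omega)
    have hca : ⁅c, a⁆ = 1 := by rw [hm] at hn1; exact hn1
    obtain ⟨hcH, hcc⟩ := hPn m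
    have hcenter : c ∈ Subgroup.center G := by
      rw [Subgroup.mem_center_iff]
      intro g
      have hg : g ∈ Subgroup.centralizer {c} := by
        have : (⊤ : Subgroup G) ≤ Subgroup.centralizer {c} := by
          rw [← hgen]
          refine sup_le ?_ ?_
          · intro h hh
            exact Subgroup.mem_centralizer_iff.mpr (by rintro g' rfl; exact hcc h hh)
          · refine (Subgroup.closure_le _).mpr ?_
            intro y hy
            rw [Set.mem_singleton_iff] at hy
            subst hy
            exact Subgroup.mem_centralizer_iff.mpr
              (by rintro g' rfl; exact commutatorElement_eq_one_iff_mul_comm.mp hca)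
        exact this (Subgroup.mem_top g)
      exact (Subgroup.mem_centralizer_iff.mp hg c rfl).symm
    intro hbot
    rw [hbot] at hcenter
    exact hcne (Subgroup.mem_bot.mp hcenter)
end

section
/- Let G be a group, H a hypercentral normal subgroup with nontrivial center Z = Z(H), G = H⟨a⟩, and a an Engel element of G. Then C_Z(a) ≤ Z(G) and C_Z(a) ≠ 1. -/
open scoped commutatorElement

/-!
The centre `Z` of `H` is normal in `G`, so the Engel sequence `[z, n a]` of a nontrivial
`z ∈ Z` stays in `Z`; its last nontrivial term commutes with `a`. An element of `Z` commuting
with `a` centralizes both `H` and `a`, hence all of `G = H⟨a⟩`.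
-/

section

variable {G : Type*} [Group G]

theorem engel_mem {N : Subgroup G} [N.Normal] (a : G) {x : G} (hx : x ∈ N) (n : ℕ) :
    engel a x n ∈ N := by
  induction n with
  | zero => exact hx
  | succ n ih =>
    exact Subgroup.commutator_le_left N ⊤
      (Subgroup.commutator_mem_commutator ih (Subgroup.mem_top a))

theorem exists_engel_ne_one_commute {a x : G} (hx : x ≠ 1) (h : ∃ n, engel a x n = 1) :
    ∃ m, engel a x m ≠ 1 ∧ Commute (engel a x m) a := by
  by_contra! hcontra
  obtain ⟨n, hn⟩ := h
  suffices ∀ m, engel a x m ≠ 1 from this n hn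
  intro m
  induction m with
  | zero => exact hx
  | succ m ih => exact mt commutatorElement_eq_one_iff_commute.mp (hcontra m ih)

namespace Subgroup

theorem inf_centralizer_singleton_ne_bot_of_engel {N : Subgroup G} [N.Normal] {a : G}
    (hN : N ≠ ⊥) (hEngel : ∀ x : G, ∃ n, engel a x n = 1) :
    N ⊓ centralizer {a} ≠ ⊥ := by
  obtain ⟨⟨x, hxN⟩, hx⟩ := ne_bot_iff_exists_ne_one.mp hN
  obtain ⟨m, hm, hcomm⟩ := exists_engel_ne_one_commute (x := x) (by simpa using hx) (hEngel x)
  refine ne_bot_iff_exists_ne_one.mpr ⟨⟨engel a x m, engel_mem a hxN m, ?_⟩, ?_⟩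
  · exact mem_centralizer_singleton_iff.mpr hcomm
  · exact fun h ↦ hm (congrArg Subtype.val h)

theorem mem_center_of_mem_centralizer_sup_closure {K : Subgroup G} {a z : G}
    (hgen : K ⊔ closure {a} = ⊤) (hK : z ∈ centralizer (K : Set G))
    (ha : z ∈ centralizer {a}) : z ∈ center G := by
  rw [← centralizer_univ, ← coe_top, ← hgen, ← closure_eq K, ← closure_union,
    centralizer_closure]
  show z ∈ Set.centralizer _
  rw [Set.centralizer_union]
  exact ⟨hK, ha⟩

end Subgroup

end

theorem stmt_11_general {G : Type*} [Group G] (H : Subgroup G) [H.Normal]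
    (a : G)
    (hgen : H ⊔ Subgroup.closure {a} = ⊤)
    (hEngel : ∀ x : G, ∃ n : ℕ, engel a x n = 1)
    (hZ : H ⊓ Subgroup.centralizer (H : Set G) ≠ ⊥) :
    (H ⊓ Subgroup.centralizer (H : Set G)) ⊓ Subgroup.centralizer {a} ≤ Subgroup.center G ∧
      (H ⊓ Subgroup.centralizer (H : Set G)) ⊓ Subgroup.centralizer {a} ≠ ⊥ :=
  ⟨fun _ ⟨⟨_, hzH⟩, hza⟩ ↦ Subgroup.mem_center_of_mem_centralizer_sup_closure hgen hzH hza,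
    Subgroup.inf_centralizer_singleton_ne_bot_of_engel hZ hEngel⟩

theorem stmt_11 {G : Type*} [Group G] (H : Subgroup G) [H.Normal]
    (hH : IsHypercentral ↥H) (a : G)
    (hgen : H ⊔ Subgroup.closure {a} = ⊤)
    (hEngel : ∀ x : G, ∃ n : ℕ, engel a x n = 1)
    (hZ : H ⊓ Subgroup.centralizer (H : Set G) ≠ ⊥) :
    (H ⊓ Subgroup.centralizer (H : Set G)) ⊓ Subgroup.centralizer {a} ≤ Subgroup.center G ∧
      (H ⊓ Subgroup.centralizer (H : Set G)) ⊓ Subgroup.centralizer {a} ≠ ⊥ :=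
  stmt_11_general H a hgen hEngel hZ
end

section
/- Let G = H⟨a⟩ be a group with H ⊴ G, where a is an almost Engel element with finite sink E(a), and let N be a finite normal subgroup of H. Then there is k such that the normal closure ⟨N^G⟩ of N in G satisfies ⟨N^G⟩ ≤ ∏_{i=0}^{k} N^{a^i}, hence ⟨N^G⟩ is finite. -/
open Pointwise
open scoped commutatorElement

namespace Stmt15Aux

variable {G : Type*} [Group G]

/-- `N^{a^i}`. -/
def Ni (a : G) (N : Subgroup G) (i : ℕ) : Subgroup G :=
  N.map (MulAut.conj (a ^ i)).toMonoidHom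

/-- `⟨N^{a^0}, …, N^{a^{k-1}}⟩` as an iterated sup. -/
def Q (a : G) (N : Subgroup G) : ℕ → Subgroup G
  | 0 => ⊥
  | k + 1 => Q a N k ⊔ Ni a N k

lemma mem_Ni {a : G} {N : Subgroup G} {i : ℕ} {y : G} :
    y ∈ Ni a N i ↔ ∃ n ∈ N, a ^ i * n * (a ^ i)⁻¹ = y := by
  simp only [Ni, Subgroup.mem_map, MulEquiv.coe_toMonoidHom, MulAut.conj_apply]

lemma Ni_le_H {a : G} {N H : Subgroup G} [H.Normal] (hNH : N ≤ H) (i : ℕ) :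
    Ni a N i ≤ H := by
  intro y hy
  obtain ⟨n, hn, rfl⟩ := mem_Ni.mp hy
  exact Subgroup.Normal.conj_mem ‹H.Normal› n (hNH hn) (a ^ i)

lemma Q_le_H {a : G} {N H : Subgroup G} [H.Normal] (hNH : N ≤ H) :
    ∀ k, Q a N k ≤ H
  | 0 => bot_le
  | k + 1 => sup_le (Q_le_H hNH k) (Ni_le_H hNH k)

lemma Q_mono {a : G} {N : Subgroup G} : Monotone (Q a N) := by
  apply monotone_nat_of_le_succ
  intro n
  exact le_sup_left

lemma Ni_le_Q {a : G} {N : Subgroup G} {i k : ℕ} (h : i < k) :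
    Ni a N i ≤ Q a N k := by
  calc Ni a N i ≤ Q a N (i + 1) := le_sup_right
    _ ≤ Q a N k := Q_mono h

lemma conj_mem_Ni {a : G} {N H : Subgroup G} [H.Normal] (hNH : N ≤ H)
    (hNnorm : ∀ h ∈ H, ∀ x ∈ N, h⁻¹ * x * h ∈ N)
    {i : ℕ} {h y : G} (hh : h ∈ H) (hy : y ∈ Ni a N i) :
    h⁻¹ * y * h ∈ Ni a N i := by
  obtain ⟨n, hn, rfl⟩ := mem_Ni.mp hy
  have hh' : (a ^ i)⁻¹ * h * a ^ i ∈ H := by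
    simpa using Subgroup.Normal.conj_mem ‹H.Normal› h hh (a ^ i)⁻¹
  refine mem_Ni.mpr ⟨((a ^ i)⁻¹ * h * a ^ i)⁻¹ * n * ((a ^ i)⁻¹ * h * a ^ i),
    hNnorm _ hh' n hn, ?_⟩
  group

lemma conj_a_mem_Ni {a : G} {N : Subgroup G} {i : ℕ} {y : G} (hy : y ∈ Ni a N i) :
    a * y * a⁻¹ ∈ Ni a N (i + 1) := by
  obtain ⟨n, hn, rfl⟩ := mem_Ni.mp hy
  refine mem_Ni.mpr ⟨n, hn, ?_⟩
  rw [pow_succ']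
  group

lemma conj_a_mem_Q {a : G} {N : Subgroup G} :
    ∀ k, ∀ {y : G}, y ∈ Q a N k → a * y * a⁻¹ ∈ Q a N (k + 1) := by
  intro k
  induction k with
  | zero =>
    intro y hy
    rw [Q, Subgroup.mem_bot] at hy
    subst hy
    simpa using (Q a N 1).one_mem
  | succ m ih =>
    intro y hy
    have key : Subgroup.map (MulAut.conj a).toMonoidHom (Q a N (m + 1)) ≤ Q a N (m + 2) := by
      show Subgroup.map _ (Q a N m ⊔ Ni a N m) ≤ Q a N (m + 2)
      rw [Subgroup.map_sup]
      refine sup_le ?_ ?_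
      · rintro z ⟨w, hw, rfl⟩
        exact Q_mono (by omega : m + 1 ≤ m + 2) (ih hw)
      · rintro z ⟨w, hw, rfl⟩
        exact Ni_le_Q (by omega) (conj_a_mem_Ni hw)
    exact key ⟨y, hy, rfl⟩

lemma conj_mem_Q {a : G} {N H : Subgroup G} [H.Normal] (hNH : N ≤ H)
    (hNnorm : ∀ h ∈ H, ∀ x ∈ N, h⁻¹ * x * h ∈ N) :
    ∀ k, ∀ {h y : G}, h ∈ H → y ∈ Q a N k → h⁻¹ * y * h ∈ Q a N k := by
  intro k
  induction k with
  | zero =>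
    intro h y _ hy
    rw [Q, Subgroup.mem_bot] at hy
    subst hy
    simpa using (Q a N 0).one_mem
  | succ m ih =>
    intro h y hh hy
    have key : Subgroup.map (MulAut.conj h⁻¹).toMonoidHom (Q a N (m + 1)) ≤ Q a N (m + 1) := by
      show Subgroup.map _ (Q a N m ⊔ Ni a N m) ≤ Q a N (m + 1)
      rw [Subgroup.map_sup]
      refine sup_le ?_ ?_
      · rintro z ⟨w, hw, rfl⟩
        have := ih hh hw
        apply Q_mono (by omega : m ≤ m + 1)
        simpa [MulAut.conj_apply, mul_assoc] using this
      · rintro z ⟨w, hw, rfl⟩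
        have := conj_mem_Ni (a := a) hNH hNnorm hh hw
        apply Ni_le_Q (by omega : m < m + 1)
        simpa [MulAut.conj_apply, mul_assoc] using this
    have := key ⟨y, hy, rfl⟩
    simpa [MulAut.conj_apply, mul_assoc] using this

lemma coe_sup_of_comm (A B : Subgroup G)
    (hc : (B : Set G) * (A : Set G) ⊆ (A : Set G) * (B : Set G)) :
    ((A ⊔ B : Subgroup G) : Set G) = (A : Set G) * (B : Set G) := by
  have hmul : ∀ x ∈ (A : Set G) * (B : Set G), ∀ y ∈ (A : Set G) * (B : Set G),
      x * y ∈ (A : Set G) * (B : Set G) := by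
    rintro x ⟨a1, ha1, b1, hb1, rfl⟩ y ⟨a2, ha2, b2, hb2, rfl⟩
    obtain ⟨a3, ha3, b3, hb3, h3⟩ := hc (Set.mul_mem_mul hb1 ha2)
    refine ⟨a1 * a3, A.mul_mem ha1 ha3, b3 * b2, B.mul_mem hb3 hb2, ?_⟩
    show a1 * a3 * (b3 * b2) = a1 * b1 * (a2 * b2)
    have h3' : a3 * b3 = b1 * a2 := h3
    calc a1 * a3 * (b3 * b2) = a1 * (a3 * b3) * b2 := by group
      _ = a1 * (b1 * a2) * b2 := by rw [h3']
      _ = a1 * b1 * (a2 * b2) := by group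
  have hinv : ∀ x ∈ (A : Set G) * (B : Set G), x⁻¹ ∈ (A : Set G) * (B : Set G) := by
    rintro x ⟨a1, ha1, b1, hb1, rfl⟩
    have : b1⁻¹ * a1⁻¹ ∈ (B : Set G) * (A : Set G) :=
      Set.mul_mem_mul (B.inv_mem hb1) (A.inv_mem ha1)
    simpa [mul_inv_rev] using hc this
  let P : Subgroup G :=
    { carrier := (A : Set G) * (B : Set G)
      one_mem' := ⟨1, A.one_mem, 1, B.one_mem, by simp⟩
      mul_mem' := fun hx hy => hmul _ hx _ hy
      inv_mem' := fun hx => hinv _ hx }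
  have hPA : A ≤ P := fun x hx => ⟨x, hx, 1, B.one_mem, by simp⟩
  have hPB : B ≤ P := fun x hx => ⟨1, A.one_mem, x, hx, by simp⟩
  apply subset_antisymm
  · exact fun x hx => (sup_le hPA hPB) hx
  · rintro x ⟨a1, ha1, b1, hb1, rfl⟩
    exact Subgroup.mul_mem _ (Subgroup.mem_sup_left ha1) (Subgroup.mem_sup_right hb1)

lemma comm_QN {a : G} {N H : Subgroup G} [H.Normal] (hNH : N ≤ H)
    (hNnorm : ∀ h ∈ H, ∀ x ∈ N, h⁻¹ * x * h ∈ N) (m : ℕ) :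
    ((Ni a N m : Subgroup G) : Set G) * ((Q a N m : Subgroup G) : Set G)
      ⊆ ((Q a N m : Subgroup G) : Set G) * ((Ni a N m : Subgroup G) : Set G) := by
  rintro x ⟨b, hb, q, hq, rfl⟩
  refine ⟨q, hq, q⁻¹ * b * q, conj_mem_Ni hNH hNnorm (Q_le_H hNH m hq) hb, ?_⟩
  show q * (q⁻¹ * b * q) = b * q
  group

lemma coe_Q {a : G} {N H : Subgroup G} [H.Normal] (hNH : N ≤ H)
    (hNnorm : ∀ h ∈ H, ∀ x ∈ N, h⁻¹ * x * h ∈ N) :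
    ∀ k, ((Q a N k : Subgroup G) : Set G)
      = ((List.range k).map (fun i => ((Ni a N i : Subgroup G) : Set G))).prod := by
  intro k
  induction k with
  | zero =>
    show ((⊥ : Subgroup G) : Set G) = _
    simp
    rfl
  | succ m ih =>
    rw [List.range_succ, List.map_append, List.prod_append]
    show ((Q a N m ⊔ Ni a N m : Subgroup G) : Set G) = _
    rw [coe_sup_of_comm _ _ (comm_QN hNH hNnorm m), ih]
    simp

lemma Ni_finite {a : G} {N : Subgroup G} (hNfin : (N : Set G).Finite) (m : ℕ) :
    ((Ni a N m : Subgroup G) : Set G).Finite := by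
  have : ((Ni a N m : Subgroup G) : Set G)
      = ((MulAut.conj (a ^ m)).toMonoidHom : G → G) '' (N : Set G) := by
    simp [Ni, Subgroup.coe_map]
  rw [this]
  exact hNfin.image _

lemma Q_finite {a : G} {N H : Subgroup G} [H.Normal] (hNH : N ≤ H)
    (hNnorm : ∀ h ∈ H, ∀ x ∈ N, h⁻¹ * x * h ∈ N)
    (hNfin : (N : Set G).Finite) :
    ∀ k, ((Q a N k : Subgroup G) : Set G).Finite := by
  intro k
  induction k with
  | zero =>
    show ((⊥ : Subgroup G) : Set G).Finite
    simp
  | succ m ih =>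
    show ((Q a N m ⊔ Ni a N m : Subgroup G) : Set G).Finite
    rw [coe_sup_of_comm _ _ (comm_QN hNH hNnorm m)]
    exact ih.mul (Ni_finite hNfin m)

lemma engel_mem_Q {a : G} {N : Subgroup G} {x : G} (hx : x ∈ N) :
    ∀ n, engel a x n ∈ Q a N (n + 1) := by
  intro n
  induction n with
  | zero =>
    show x ∈ Q a N 1
    have h0 : x ∈ Ni a N 0 := mem_Ni.mpr ⟨x, hx, by simp⟩
    exact Ni_le_Q (by omega) h0
  | succ m ih =>
    show ⁅engel a x m, a⁆ ∈ Q a N (m + 2)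
    have hrw : ⁅engel a x m, a⁆ = engel a x m * (a * (engel a x m)⁻¹ * a⁻¹) := by
      rw [commutatorElement_def]; group
    rw [hrw]
    exact Subgroup.mul_mem _ (Q_mono (by omega : m + 1 ≤ m + 2) ih)
      (conj_a_mem_Q (m + 1) ((Q a N (m + 1)).inv_mem ih))

lemma conj_engel {a x : G} (n : ℕ) :
    a * engel a x n * a⁻¹ = (engel a x (n + 1))⁻¹ * engel a x n := by
  show a * engel a x n * a⁻¹ = (⁅engel a x n, a⁆)⁻¹ * engel a x n
  rw [commutatorElement_def]
  group

lemma engel_coset {a : G} {N : Subgroup G} {x : G} (hx : x ∈ N) :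
    ∀ n, ∃ q1 ∈ Q a N n, ∃ q2 ∈ Q a N n,
      a ^ n * x * (a ^ n)⁻¹ = q1 * engel a x n * q2 ∨
      a ^ n * x * (a ^ n)⁻¹ = q1 * (engel a x n)⁻¹ * q2 := by
  intro n
  induction n with
  | zero =>
    exact ⟨1, Subgroup.one_mem _, 1, Subgroup.one_mem _, Or.inl (by simp [engel])⟩
  | succ m ih =>
    obtain ⟨q1, hq1, q2, hq2, hcase⟩ := ih
    have hstep : a ^ (m + 1) * x * (a ^ (m + 1))⁻¹
        = (a * q1 * a⁻¹) * (a * engel a x m * a⁻¹) * (a * q2 * a⁻¹) ∨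
        a ^ (m + 1) * x * (a ^ (m + 1))⁻¹
        = (a * q1 * a⁻¹) * (a * (engel a x m)⁻¹ * a⁻¹) * (a * q2 * a⁻¹) := by
      rcases hcase with h | h
      · left
        rw [pow_succ']
        calc a * a ^ m * x * (a * a ^ m)⁻¹ = a * (a ^ m * x * (a ^ m)⁻¹) * a⁻¹ := by group
          _ = a * (q1 * engel a x m * q2) * a⁻¹ := by rw [h]
          _ = _ := by group
      · right
        rw [pow_succ']
        calc a * a ^ m * x * (a * a ^ m)⁻¹ = a * (a ^ m * x * (a ^ m)⁻¹) * a⁻¹ := by group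
          _ = a * (q1 * (engel a x m)⁻¹ * q2) * a⁻¹ := by rw [h]
          _ = _ := by group
    have hq1' : a * q1 * a⁻¹ ∈ Q a N (m + 1) := conj_a_mem_Q m hq1
    have hq2' : a * q2 * a⁻¹ ∈ Q a N (m + 1) := conj_a_mem_Q m hq2
    have hc : a * (engel a x m)⁻¹ * a⁻¹ = (engel a x m)⁻¹ * engel a x (m + 1) := by
      have := conj_engel (a := a) (x := x) m
      calc a * (engel a x m)⁻¹ * a⁻¹ = (a * engel a x m * a⁻¹)⁻¹ := by group
        _ = ((engel a x (m + 1))⁻¹ * engel a x m)⁻¹ := by rw [this]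
        _ = _ := by group
    rcases hstep with h | h
    · -- a * e * a⁻¹ = e'⁻¹ * e  gives the inverse case
      refine ⟨a * q1 * a⁻¹, hq1', engel a x m * (a * q2 * a⁻¹), ?_, Or.inr ?_⟩
      · exact (Q a N (m + 1)).mul_mem (engel_mem_Q hx m) hq2'
      · rw [h, conj_engel]
        group
    · refine ⟨(a * q1 * a⁻¹) * (engel a x m)⁻¹, ?_, a * q2 * a⁻¹, hq2', Or.inl ?_⟩
      · exact (Q a N (m + 1)).mul_mem hq1' ((Q a N (m + 1)).inv_mem (engel_mem_Q hx m))
      · rw [h, hc]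
        group

lemma coe_Ni {a : G} {N : Subgroup G} (i : ℕ) :
    ((Ni a N i : Subgroup G) : Set G) = (fun x => a ^ i * x * (a ^ i)⁻¹) '' (N : Set G) := by
  ext y
  simp only [SetLike.mem_coe, mem_Ni, Set.mem_image]

lemma stabilize {a : G} {N : Subgroup G} (hNfin : (N : Set G).Finite)
    {E : Set G} (hE : IsSink a E) :
    ∃ k : ℕ, ∀ x ∈ N, a ^ (k + 1) * x * (a ^ (k + 1))⁻¹ ∈ Q a N (k + 1) := by
  by_contra hcon
  push_neg at hcon
  choose xf hxf1 hxf2 using hcon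
  obtain ⟨hEfin, hEs⟩ := hE
  choose bnd hbnd using hEs
  set M := hNfin.toFinset.sup bnd with hM
  have hMle : ∀ x ∈ N, bnd x ≤ M := fun x hx =>
    Finset.le_sup (hNfin.mem_toFinset.mpr hx)
  set g : ℕ → G := fun j => engel a (xf (M + j)) (M + j + 1) with hg
  have hgE : ∀ j, g j ∈ E := fun j =>
    hbnd (xf (M + j)) (M + j + 1) (le_trans (hMle _ (hxf1 (M + j))) (by omega))
  have hnotin : ∀ j, g j ∉ Q a N (M + j + 1) := by
    intro j hmem
    apply hxf2 (M + j)
    obtain ⟨q1, hq1, q2, hq2, hc⟩ := engel_coset (a := a) (hxf1 (M + j)) (M + j + 1)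
    rcases hc with h | h
    · rw [h]
      exact Subgroup.mul_mem _ (Subgroup.mul_mem _ hq1 hmem) hq2
    · rw [h]
      exact Subgroup.mul_mem _ (Subgroup.mul_mem _ hq1 ((Q a N (M + j + 1)).inv_mem hmem)) hq2
  have hin : ∀ j, g j ∈ Q a N (M + j + 2) := fun j => engel_mem_Q (hxf1 _) _
  have hginj : Function.Injective g := by
    intro j j' hjj
    by_contra hne
    rcases Nat.lt_or_ge j j' with hlt | hge
    · exact hnotin j' (hjj ▸ Q_mono (by omega : M + j + 2 ≤ M + j' + 1) (hin j))
    · have hlt : j' < j := by omega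
      exact hnotin j (hjj ▸ Q_mono (by omega : M + j' + 2 ≤ M + j + 1) (hin j'))
  exact hEfin.not_infinite (Set.infinite_of_injective_forall_mem hginj hgE)

end Stmt15Aux

open Stmt15Aux in
theorem stmt_15 {G : Type*} [Group G] (H : Subgroup G) [H.Normal] (a : G)
    (hgen : H ⊔ Subgroup.closure {a} = ⊤)
    (hEngel : ∃ E : Set G, IsSink a E)
    (N : Subgroup G) (hNH : N ≤ H) (hNfin : (N : Set G).Finite)
    (hNnorm : ∀ h ∈ H, ∀ x ∈ N, h⁻¹ * x * h ∈ N) :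
    ∃ k : ℕ,
      ((Subgroup.normalClosure (N : Set G) : Subgroup G) : Set G) ⊆
        (((List.range (k + 1)).map
          (fun i => (fun x => a ^ i * x * (a ^ i)⁻¹) '' (N : Set G))).prod) ∧
      ((Subgroup.normalClosure (N : Set G) : Subgroup G) : Set G).Finite := by
  obtain ⟨E, hE⟩ := hEngel
  obtain ⟨k, hk⟩ := stabilize hNfin hE
  set P := Q a N (k + 1) with hP
  have hNile : Ni a N (k + 1) ≤ P := by
    rintro y hy
    obtain ⟨n, hn, rfl⟩ := mem_Ni.mp hy
    exact hk n hn
  have hQ2 : Q a N (k + 2) ≤ P := by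
    show Q a N (k + 1) ⊔ Ni a N (k + 1) ≤ P
    exact sup_le le_rfl hNile
  have hPconj : ∀ y ∈ P, a * y * a⁻¹ ∈ P := fun y hy => hQ2 (conj_a_mem_Q _ hy)
  have hPfin : (P : Set G).Finite := Q_finite hNH hNnorm hNfin (k + 1)
  have hPconj' : ∀ y ∈ P, a⁻¹ * y * a ∈ P := by
    have hmaps : Set.MapsTo (fun y => a * y * a⁻¹) (P : Set G) (P : Set G) :=
      fun y hy => hPconj y hy
    have hinj : Set.InjOn (fun y => a * y * a⁻¹) (P : Set G) := by
      intro y _ z _ hyz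
      simpa using mul_left_cancel (mul_right_cancel hyz)
    have hbij := (hPfin.injOn_iff_bijOn_of_mapsTo hmaps).mp hinj
    intro y hy
    obtain ⟨z, hz, hzy⟩ := hbij.surjOn hy
    have : a⁻¹ * y * a = z := by
      rw [← hzy]; group
    rw [this]; exact hz
  have hHnorm : H ≤ Subgroup.normalizer (P : Set G) := by
    intro h hh
    rw [Subgroup.mem_normalizer_iff]
    intro y
    constructor
    · intro hy
      have := conj_mem_Q hNH hNnorm (k + 1) (H.inv_mem hh) hy
      simpa using this
    · intro hy
      have := conj_mem_Q hNH hNnorm (k + 1) hh hy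
      simpa [mul_assoc] using this
  have ha : a ∈ Subgroup.normalizer (P : Set G) := by
    rw [Subgroup.mem_normalizer_iff]
    intro y
    constructor
    · exact fun hy => hPconj y hy
    · intro hy
      have := hPconj' _ hy
      simpa [mul_assoc] using this
  have htop : Subgroup.normalizer (P : Set G) = ⊤ := by
    rw [eq_top_iff, ← hgen]
    exact sup_le hHnorm ((Subgroup.closure_le _).mpr (by simpa using ha))
  haveI hPn : P.Normal := Subgroup.normalizer_eq_top_iff.mp htop
  have hNP : (N : Set G) ⊆ (P : Set G) := by
    intro x hx
    have h0 : x ∈ Ni a N 0 := mem_Ni.mpr ⟨x, hx, by simp⟩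
    exact Ni_le_Q (by omega) h0
  have hclos : Subgroup.normalClosure (N : Set G) ≤ P :=
    Subgroup.normalClosure_le_normal hNP
  refine ⟨k, ?_, ?_⟩
  · have hfun : (fun i => (fun x => a ^ i * x * (a ^ i)⁻¹) '' (N : Set G))
        = fun i => ((Ni a N i : Subgroup G) : Set G) := by
      funext i
      exact (coe_Ni i).symm
    rw [hfun, ← coe_Q hNH hNnorm (k + 1)]
    exact fun x hx => hclos hx
  · exact hPfin.subset (fun x hx => hclos hx)
end
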